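/- Let F be a h-Lagrangian submersion from a hyperkähler manifold (M, I, J, K, g_M) onto (N, g_N) with h-Lagrangian basis (I, J, K). Then F is a totally geodesic map if and only if A_X(IV) = 0 and T_V(IW) = 0 for all vertical V, W and horizontal X; equivalently the same conditions hold with I replaced by K, and equivalently with I replaced by J. -/

import Mathlib

/- A synthetic (Koszul-algebraic) model of the geometry of a Riemannian submersion
`F : (M, g_M) → (N, g_N)`:
`Fn` plays the role of the ring of smooth functions on the total space `M`,
`VF` the `Fn`-module of vector fields on `M`, `g` the Riemannian metric `g_M`,
`nabla` its Levi-Civita connection, `bracket` the Lie bracket, `deriv` the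
action of vector fields on functions, and `vp` the orthogonal projection onto
the vertical distribution `ker F_*` (so `hp = id - vp` is the horizontal
projection onto `(ker F_*)^⊥`). -/

variable {Fn : Type} [CommRing Fn] [Algebra ℝ Fn]
variable {VF : Type} [AddCommGroup VF] [Module Fn VF] [Module ℝ VF] [IsScalarTower ℝ Fn VF]

/-- The horizontal projection `H = id - V`. -/
def hp (vp : VF →ₗ[Fn] VF) (X : VF) : VF := X - vp X

/-- A vector field is vertical if it is fixed by the vertical projection. -/
def IsVertical (vp : VF →ₗ[Fn] VF) (X : VF) : Prop := vp X = X

/-- A vector field is horizontal if it is killed by the vertical projection. -/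
def IsHorizontal (vp : VF →ₗ[Fn] VF) (X : VF) : Prop := vp X = 0

/-- The O'Neill tensor `T_U V = H∇_{VU}VV + V∇_{VU}HV`. -/
def Tten (nabla : VF → VF → VF) (vp : VF →ₗ[Fn] VF) (U V : VF) : VF :=
  hp vp (nabla (vp U) (vp V)) + vp (nabla (vp U) (hp vp V))

/-- The O'Neill tensor `A_U V = H∇_{HU}VV + V∇_{HU}HV`. -/
def Aten (nabla : VF → VF → VF) (vp : VF →ₗ[Fn] VF) (U V : VF) : VF :=
  hp vp (nabla (hp vp U) (vp V)) + vp (nabla (hp vp U) (hp vp V))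

/-- `F` is a totally geodesic map: its second fundamental form `∇F_*` vanishes.
For a Riemannian submersion, `(∇F_*)(X,Y) = 0` automatically for horizontal
`X, Y`, `(∇F_*)(V,W) = -F_*(T_V W)` for vertical `V, W`, and
`(∇F_*)(X,V) = -F_*(A_X V)` for horizontal `X` and vertical `V`; since `F_*` is
injective on horizontal vectors, `F` is totally geodesic iff these O'Neill
tensor terms vanish. -/
def TotallyGeodesicMap (nabla : VF → VF → VF) (vp : VF →ₗ[Fn] VF) : Prop :=
  (∀ V W : VF, IsVertical vp V → IsVertical vp W → Tten nabla vp V W = 0) ∧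
  (∀ X V : VF, IsHorizontal vp X → IsVertical vp V → Aten nabla vp X V = 0)

/-! The O'Neill tensors `T` and `A` are the two restrictions of one operator `offDiag`, the part of
`∇_U` that exchanges the vertical and horizontal distributions. A parallel endomorphism `L` that
either preserves or swaps the two distributions commutes with `offDiag`, so `T_V (L W) = L (T_V W)`
and `A_X (L V) = L (A_X V)`; as `L² = -1`, `L` is injective, and the conditions with `L` inserted
are equivalent to the vanishing of `T` and `A`. For an h-Lagrangian submersion, `J` preserves the
distributions while `I` and `K` swap them. -/

theorem injective_of_apply_apply_eq_neg {α : Type*} [InvolutiveNeg α] {f : α → α}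
    (h : ∀ x, f (f x) = -x) : Function.Injective f := fun a b hab => by
  rw [← neg_neg a, ← h a, hab, h b, neg_neg]

section

variable {R M : Type} [CommRing R] [AddCommGroup M] [Module R M]

theorem vp_add_hp (vp : M →ₗ[R] M) (X : M) : vp X + hp vp X = X := add_sub_cancel _ _

variable {vp : M →ₗ[R] M}

theorem isHorizontal_hp (hvp_idem : ∀ X, vp (vp X) = vp X) (X : M) :
    IsHorizontal vp (hp vp X) := by
  simp only [IsHorizontal, hp, map_sub, hvp_idem, sub_self]

theorem vp_apply_of_preserves (hvp_idem : ∀ X, vp (vp X) = vp X) {L : M →ₗ[R] M}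
    (hV : ∀ V, IsVertical vp V → IsVertical vp (L V))
    (hH : ∀ X, IsHorizontal vp X → IsHorizontal vp (L X)) (X : M) :
    vp (L X) = L (vp X) := by
  conv_lhs => rw [← vp_add_hp vp X]
  rw [map_add, map_add, hV _ (hvp_idem X), hH _ (isHorizontal_hp hvp_idem X), add_zero]

theorem vp_apply_of_swaps (hvp_idem : ∀ X, vp (vp X) = vp X) {L : M →ₗ[R] M}
    (hV : ∀ V, IsVertical vp V → IsHorizontal vp (L V))
    (hH : ∀ X, IsHorizontal vp X → IsVertical vp (L X)) (X : M) :
    vp (L X) = L (hp vp X) := by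
  conv_lhs => rw [← vp_add_hp vp X]
  rw [map_add, map_add, hV _ (hvp_idem X), hH _ (isHorizontal_hp hvp_idem X), zero_add]

theorem hp_apply_of_preserves {L : M →ₗ[R] M} (h : ∀ X, vp (L X) = L (vp X)) (X : M) :
    hp vp (L X) = L (hp vp X) := by
  simp only [hp, h, map_sub]

theorem hp_apply_of_swaps {L : M →ₗ[R] M} (h : ∀ X, vp (L X) = L (hp vp X)) (X : M) :
    hp vp (L X) = L (vp X) := by
  simp only [hp, h, map_sub, sub_sub_cancel]

def offDiag (nabla : M → M → M) (vp : M →ₗ[R] M) (U V : M) : M :=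
  hp vp (nabla U (vp V)) + vp (nabla U (hp vp V))

theorem Tten_eq_offDiag (nabla : M → M → M) (vp : M →ₗ[R] M) (U V : M) : Tten nabla vp U V = offDiag nabla vp (vp U) V := rfl

theorem Aten_eq_offDiag (nabla : M → M → M) (vp : M →ₗ[R] M) (U V : M) : Aten nabla vp U V = offDiag nabla vp (hp vp U) V := rfl

variable {nabla : M → M → M} {L : M →ₗ[R] M}

theorem offDiag_apply_of_preserves (h : ∀ X, vp (L X) = L (vp X))
    (hL : ∀ U V, nabla U (L V) = L (nabla U V)) (U V : M) :
    offDiag nabla vp U (L V) = L (offDiag nabla vp U V) := by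
  simp only [offDiag, h, hp_apply_of_preserves h, hL, map_add]

theorem offDiag_apply_of_swaps (h : ∀ X, vp (L X) = L (hp vp X))
    (hL : ∀ U V, nabla U (L V) = L (nabla U V)) (U V : M) :
    offDiag nabla vp U (L V) = L (offDiag nabla vp U V) := by
  simp only [offDiag, h, hp_apply_of_swaps h, hL, map_add]
  exact add_comm _ _

theorem totallyGeodesicMap_iff_of_offDiag_apply (hinj : Function.Injective L)
    (hcomm : ∀ U V, offDiag nabla vp U (L V) = L (offDiag nabla vp U V)) :
    TotallyGeodesicMap nabla vp ↔
      ((∀ X V : M, IsHorizontal vp X → IsVertical vp V → Aten nabla vp X (L V) = 0) ∧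
        (∀ V W : M, IsVertical vp V → IsVertical vp W → Tten nabla vp V (L W) = 0)) := by
  simp only [TotallyGeodesicMap, Tten_eq_offDiag, Aten_eq_offDiag, hcomm,
    map_eq_zero_iff L hinj]
  exact and_comm

end

theorem hLagrangian_totally_geodesic_iff_general
    (nabla : VF → VF → VF)
    (vp : VF →ₗ[Fn] VF)
    (hvp_idem : ∀ X, vp (vp X) = vp X)
    -- a quaternionic Hermitian basis (I, J, K)
    (I J K : VF →ₗ[Fn] VF)
    (hI2 : ∀ X, I (I X) = -X) (hJ2 : ∀ X, J (J X) = -X) (hK2 : ∀ X, K (K X) = -X)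
    -- hyperkähler: I, J, K are parallel
    (hIpar : ∀ X Y, nabla X (I Y) = I (nabla X Y))
    (hJpar : ∀ X Y, nabla X (J Y) = J (nabla X Y))
    (hKpar : ∀ X Y, nabla X (K Y) = K (nabla X Y))
    -- F is h-Lagrangian: I(ker F_*) = (ker F_*)^⊥, J(ker F_*) = ker F_*,
    -- K(ker F_*) = (ker F_*)^⊥
    (hLI : ∀ V, IsVertical vp V → IsHorizontal vp (I V))
    (hLI' : ∀ X, IsHorizontal vp X → IsVertical vp (I X))
    (hLJ : ∀ V, IsVertical vp V → IsVertical vp (J V))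
    (hLJ' : ∀ X, IsHorizontal vp X → IsHorizontal vp (J X))
    (hLK : ∀ V, IsVertical vp V → IsHorizontal vp (K V))
    (hLK' : ∀ X, IsHorizontal vp X → IsVertical vp (K X))
 :
    (TotallyGeodesicMap nabla vp ↔ ((∀ X V : VF, IsHorizontal vp X → IsVertical vp V →
        Aten nabla vp X (I V) = 0) ∧
      (∀ V W : VF, IsVertical vp V → IsVertical vp W →
        Tten nabla vp V (I W) = 0))) ∧
    (TotallyGeodesicMap nabla vp ↔ ((∀ X V : VF, IsHorizontal vp X → IsVertical vp V →
        Aten nabla vp X (K V) = 0) ∧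
      (∀ V W : VF, IsVertical vp V → IsVertical vp W →
        Tten nabla vp V (K W) = 0))) ∧
    (TotallyGeodesicMap nabla vp ↔ ((∀ X V : VF, IsHorizontal vp X → IsVertical vp V →
        Aten nabla vp X (J V) = 0) ∧
      (∀ V W : VF, IsVertical vp V → IsVertical vp W →
        Tten nabla vp V (J W) = 0))) := by
  refine ⟨?_, ?_, ?_⟩
  · exact totallyGeodesicMap_iff_of_offDiag_apply (injective_of_apply_apply_eq_neg hI2)
      (offDiag_apply_of_swaps (vp_apply_of_swaps hvp_idem hLI hLI') hIpar)
  · exact totallyGeodesicMap_iff_of_offDiag_apply (injective_of_apply_apply_eq_neg hK2)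
      (offDiag_apply_of_swaps (vp_apply_of_swaps hvp_idem hLK hLK') hKpar)
  · exact totallyGeodesicMap_iff_of_offDiag_apply (injective_of_apply_apply_eq_neg hJ2)
      (offDiag_apply_of_preserves (vp_apply_of_preserves hvp_idem hLJ hLJ') hJpar)

/-- Lemma 3.15: a h-Lagrangian submersion `F` from a hyperkähler manifold is a
totally geodesic map iff `A_X IV = 0` and `T_V IW = 0` for all vertical `V, W`
and horizontal `X`; equivalently with `I` replaced by `K`, and by `J`. -/
theorem hLagrangian_totally_geodesic_iff
    (g : VF →ₗ[Fn] VF →ₗ[Fn] Fn)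
    (hg_symm : ∀ X Y, g X Y = g Y X)
    (deriv : VF → Fn → Fn)
    (nabla : VF → VF → VF) (bracket : VF → VF → VF)
    (hn_addl : ∀ X Y Z, nabla (X + Y) Z = nabla X Z + nabla Y Z)
    (hn_smul : ∀ (f : Fn) X Y, nabla (f • X) Y = f • nabla X Y)
    (hn_addr : ∀ X Y Z, nabla X (Y + Z) = nabla X Y + nabla X Z)
    (hn_leib : ∀ X (f : Fn) Y, nabla X (f • Y) = deriv X f • Y + f • nabla X Y)
    (h_compat : ∀ X Y Z, deriv X (g Y Z) = g (nabla X Y) Z + g Y (nabla X Z))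
    (h_torsion : ∀ X Y, nabla X Y - nabla Y X = bracket X Y)
    (vp : VF →ₗ[Fn] VF)
    (hvp_idem : ∀ X, vp (vp X) = vp X)
    (hvp_sa : ∀ X Y, g (vp X) Y = g X (vp Y))
    -- a quaternionic Hermitian basis (I, J, K)
    (I J K : VF →ₗ[Fn] VF)
    (hI2 : ∀ X, I (I X) = -X) (hJ2 : ∀ X, J (J X) = -X) (hK2 : ∀ X, K (K X) = -X)
    (hIiso : ∀ X Y, g (I X) (I Y) = g X Y)
    (hJiso : ∀ X Y, g (J X) (J Y) = g X Y)
    (hKiso : ∀ X Y, g (K X) (K Y) = g X Y)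
    (hIJ : ∀ X, I (J X) = K X) (hJI : ∀ X, J (I X) = -K X)
    (hJK : ∀ X, J (K X) = I X) (hKJ : ∀ X, K (J X) = -I X)
    (hKI : ∀ X, K (I X) = J X) (hIK : ∀ X, I (K X) = -J X)
    -- hyperkähler: I, J, K are parallel
    (hIpar : ∀ X Y, nabla X (I Y) = I (nabla X Y))
    (hJpar : ∀ X Y, nabla X (J Y) = J (nabla X Y))
    (hKpar : ∀ X Y, nabla X (K Y) = K (nabla X Y))
    -- F is h-Lagrangian: I(ker F_*) = (ker F_*)^⊥, J(ker F_*) = ker F_*,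
    -- K(ker F_*) = (ker F_*)^⊥
    (hLI : ∀ V, IsVertical vp V → IsHorizontal vp (I V))
    (hLI' : ∀ X, IsHorizontal vp X → IsVertical vp (I X))
    (hLJ : ∀ V, IsVertical vp V → IsVertical vp (J V))
    (hLJ' : ∀ X, IsHorizontal vp X → IsHorizontal vp (J X))
    (hLK : ∀ V, IsVertical vp V → IsHorizontal vp (K V))
    (hLK' : ∀ X, IsHorizontal vp X → IsVertical vp (K X))
 :
    (TotallyGeodesicMap nabla vp ↔ ((∀ X V : VF, IsHorizontal vp X → IsVertical vp V →
        Aten nabla vp X (I V) = 0) ∧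
      (∀ V W : VF, IsVertical vp V → IsVertical vp W →
        Tten nabla vp V (I W) = 0))) ∧
    (TotallyGeodesicMap nabla vp ↔ ((∀ X V : VF, IsHorizontal vp X → IsVertical vp V →
        Aten nabla vp X (K V) = 0) ∧
      (∀ V W : VF, IsVertical vp V → IsVertical vp W →
        Tten nabla vp V (K W) = 0))) ∧
    (TotallyGeodesicMap nabla vp ↔ ((∀ X V : VF, IsHorizontal vp X → IsVertical vp V →
        Aten nabla vp X (J V) = 0) ∧
      (∀ V W : VF, IsVertical vp V → IsVertical vp W →
        Tten nabla vp V (J W) = 0))) :=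
  hLagrangian_totally_geodesic_iff_general nabla vp hvp_idem I J K hI2 hJ2 hK2 hIpar hJpar hKpar hLI
    hLI' hLJ hLJ' hLK hLK'
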